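/- For every p ∈ ℝ⁵, let τ = sin(p₁+p₃), let G(p) be the 5×5 matrix with rows (1+τ², 0, τ², 0, −τ), (0, 1, 0, 0, 0), (τ², 0, 1+τ², 0, −τ), (0, 0, 0, 1, 0), (−τ, 0, −τ, 0, 1), defining the metric g_p(X,Y) = XᵀG(p)Y, and let φ(p) be the 5×5 matrix with rows (0, −1, 0, 0, 0), (1, 0, 0, 0, 0), (0, 0, 0, −1, 0), (0, 0, 1, 0, 0), (0, −τ, 0, −τ, 0). Let F : ℝ⁵ → ℝ² be the linear map F(x₁,…,x₅) = (x₁+x₂, x₃+x₄), and e₁,…,e₅ the standard basis. Then: (i) ker F = span{e₁−e₂, e₃−e₄, e₅} and ξ = e₅ ∈ ker F; (ii) the vectors E₁ = e₁+τe₅, E₂ = e₃+τe₅, E₃ = e₂, E₄ = e₄, E₅ = e₅ form a g_p-orthonormal basis of ℝ⁵; and (iii) the image of ker F under φ(p) equals the g_p-orthogonal complement of ker F, i.e. {X ∈ ℝ⁵ : g_p(X, W) = 0 for all W ∈ ker F}. Hence the kernel of F is anti-invariant under φ with ξ vertical (Example 4). -/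

import Mathlib

/-!
In the coordinates `θ(X) = (X₁, X₃, X₂, X₄, X₅ − τ(X₁ + X₃))` the metric `g_p` is the Euclidean
dot product, and `θ(E_i) = e_i`; this gives the orthonormal basis. Both the `g_p`-orthogonal
complement of `ker F = span{e₁ − e₂, e₃ − e₄, e₅}` (test against the three spanning vectors) and
the image `φ(ker F)` are the plane `{X₂ = X₁, X₄ = X₃, X₅ = τ(X₁ + X₃)}`.
-/

open Matrix

noncomputable section

/-- `τ = sin(p₁ + p₃)`. -/
def tau14 (p : Fin 5 → ℝ) : ℝ := Real.sin (p 0 + p 2)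

/-- The metric matrix `G(p)` of Example 2, defining `g_p(X,Y) = Xᵀ G(p) Y`. -/
def G14 (p : Fin 5 → ℝ) : Matrix (Fin 5) (Fin 5) ℝ :=
  !![1 + tau14 p ^ 2, 0, tau14 p ^ 2, 0, -tau14 p;
     0, 1, 0, 0, 0;
     tau14 p ^ 2, 0, 1 + tau14 p ^ 2, 0, -tau14 p;
     0, 0, 0, 1, 0;
     -tau14 p, 0, -tau14 p, 0, 1]

/-- The point-dependent metric `g_p(X,Y) = Xᵀ G(p) Y`. -/
def g14 (p X Y : Fin 5 → ℝ) : ℝ := dotProduct X ((G14 p).mulVec Y)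

/-- The matrix `φ(p)` of Example 2. -/
def phi14 (p : Fin 5 → ℝ) : Matrix (Fin 5) (Fin 5) ℝ :=
  !![0, -1, 0, 0, 0;
     1, 0, 0, 0, 0;
     0, 0, 0, -1, 0;
     0, 0, 1, 0, 0;
     0, -tau14 p, 0, -tau14 p, 0]

/-- The linear map `F(x₁,…,x₅) = (x₁+x₂, x₃+x₄)` of Example 4. -/
def F14 : (Fin 5 → ℝ) →ₗ[ℝ] (Fin 2 → ℝ) :=
  Matrix.mulVecLin !![(1 : ℝ), 1, 0, 0, 0; 0, 0, 1, 1, 0]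

/-- The frame `E₁ = e₁+τe₅, E₂ = e₃+τe₅, E₃ = e₂, E₄ = e₄, E₅ = e₅`. -/
def E14 (p : Fin 5 → ℝ) : Fin 5 → (Fin 5 → ℝ) :=
  ![![1, 0, 0, 0, tau14 p],
    ![0, 0, 1, 0, tau14 p],
    ![0, 1, 0, 0, 0],
    ![0, 0, 0, 1, 0],
    ![0, 0, 0, 0, 1]]

def coframe14 (p X : Fin 5 → ℝ) : Fin 5 → ℝ :=
  ![X 0, X 2, X 1, X 3, X 4 - tau14 p * (X 0 + X 2)]

lemma g14_eq_dotProduct_coframe14 (p X Y : Fin 5 → ℝ) :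
    g14 p X Y = coframe14 p X ⬝ᵥ coframe14 p Y := by
  simp [g14, G14, coframe14, mulVec, dotProduct, Fin.sum_univ_five]
  ring

lemma coframe14_E14 (p : Fin 5 → ℝ) (i : Fin 5) : coframe14 p (E14 p i) = Pi.single i 1 := by
  ext j
  fin_cases i <;> fin_cases j <;> simp [coframe14, E14]

lemma sum_coframe14_smul_E14 (p X : Fin 5 → ℝ) : ∑ i, coframe14 p X i • E14 p i = X := by
  ext j
  fin_cases j <;> simp [coframe14, E14, Fin.sum_univ_five]
  ring

lemma g14_E14_E14 (p : Fin 5 → ℝ) (i j : Fin 5) :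
    g14 p (E14 p i) (E14 p j) = if i = j then 1 else 0 := by
  simp [g14_eq_dotProduct_coframe14, coframe14_E14, Pi.single_apply, eq_comm]

lemma span_range_E14 (p : Fin 5 → ℝ) : Submodule.span ℝ (Set.range (E14 p)) = ⊤ :=
  eq_top_iff.2 fun X _ =>
    (Submodule.mem_span_range_iff_exists_fun ℝ).2 ⟨coframe14 p X, sum_coframe14_smul_E14 p X⟩

lemma F14_apply (x : Fin 5 → ℝ) : F14 x = ![x 0 + x 1, x 2 + x 3] := by
  ext i
  fin_cases i <;> simp [F14, dotProduct, Fin.sum_univ_five]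

lemma mem_ker_F14 (x : Fin 5 → ℝ) : x ∈ LinearMap.ker F14 ↔ x 0 + x 1 = 0 ∧ x 2 + x 3 = 0 := by
  simp [F14_apply]

lemma ker_F14_eq_span : LinearMap.ker F14 = Submodule.span ℝ
    {(![1, -1, 0, 0, 0] : Fin 5 → ℝ), ![0, 0, 1, -1, 0], ![0, 0, 0, 0, 1]} := by
  refine le_antisymm (fun x hx => ?_) (Submodule.span_le.2 ?_)
  · obtain ⟨h01, h23⟩ := (mem_ker_F14 x).1 hx
    have hx : x = x 0 • (![1, -1, 0, 0, 0] : Fin 5 → ℝ) + x 2 • ![0, 0, 1, -1, 0] +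
        x 4 • ![0, 0, 0, 0, 1] := by
      ext i
      fin_cases i <;> simp <;> linarith
    rw [hx]
    refine add_mem (add_mem ?_ ?_) ?_ <;>
      exact Submodule.smul_mem _ _ (Submodule.subset_span (by simp))
  · simp [Set.insert_subset_iff, F14_apply]

lemma forall_mem_span_apply_eq_zero_iff {R M N : Type*} [Semiring R] [AddCommMonoid M]
    [AddCommMonoid N] [Module R M] [Module R N] (f : M →ₗ[R] N) (s : Set M) :
    (∀ w ∈ Submodule.span R s, f w = 0) ↔ ∀ w ∈ s, f w = 0 :=
  Submodule.span_le (p := LinearMap.ker f)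

lemma g14_orthogonal_ker_F14_iff (p X : Fin 5 → ℝ) :
    (∀ W ∈ LinearMap.ker F14, g14 p X W = 0) ↔
      X 1 = X 0 ∧ X 3 = X 2 ∧ X 4 = tau14 p * (X 0 + X 2) := by
  have hlin : g14 p X = toLinearMap₂' ℝ (G14 p) X :=
    funext fun W => (toLinearMap₂'_apply' (G14 p) X W).symm
  rw [ker_F14_eq_span, hlin, forall_mem_span_apply_eq_zero_iff, ← hlin]
  simp [g14_eq_dotProduct_coframe14, coframe14, dotProduct, Fin.sum_univ_five]
  constructor
  · rintro ⟨h1, h3, h4⟩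
    rw [h4] at h1 h3
    exact ⟨by linarith, by linarith, by linarith⟩
  · rintro ⟨h1, h3, h4⟩
    simp [h1, h3, h4]

lemma phi14_mulVec (p x : Fin 5 → ℝ) :
    phi14 p *ᵥ x = ![-x 1, x 0, -x 3, x 2, -tau14 p * (x 1 + x 3)] := by
  ext i
  fin_cases i <;> simp [phi14, mulVec, dotProduct, Fin.sum_univ_five]
  ring

lemma image_phi14_ker_F14 (p : Fin 5 → ℝ) :
    (fun X => (phi14 p).mulVec X) '' (LinearMap.ker F14 : Set (Fin 5 → ℝ)) =
      {X | X 1 = X 0 ∧ X 3 = X 2 ∧ X 4 = tau14 p * (X 0 + X 2)} := by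
  ext X
  constructor
  · rintro ⟨x, hx, rfl⟩
    rw [SetLike.mem_coe, mem_ker_F14] at hx
    simp only [phi14_mulVec, Set.mem_ofPred_eq, cons_val]
    exact ⟨by linarith, by linarith, by linarith⟩
  · rintro ⟨h1, h3, h4⟩
    refine ⟨![X 0, -X 0, X 2, -X 2, 0], by simp [F14_apply], ?_⟩
    ext i
    fin_cases i <;> simp [phi14_mulVec, h1, h3, h4]
    ring

/-- Example 4: for the cosymplectic structure of Example 2 on `ℝ⁵`
and the linear map `F(x) = (x₁+x₂, x₃+x₄)`:
(i) `ker F = span{e₁−e₂, e₃−e₄, e₅}` and `ξ = e₅ ∈ ker F`;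
(ii) `E₁,…,E₅` form a `g_p`-orthonormal basis of `ℝ⁵`;
(iii) `φ(p)(ker F)` equals the `g_p`-orthogonal complement of `ker F`.
Hence the kernel of `F` is anti-invariant under `φ` with `ξ` vertical. -/
theorem example4_anti_invariant_kernel (p : Fin 5 → ℝ) :
    (LinearMap.ker F14 = Submodule.span ℝ
        {(![1, -1, 0, 0, 0] : Fin 5 → ℝ), ![0, 0, 1, -1, 0], ![0, 0, 0, 0, 1]} ∧
      (![0, 0, 0, 0, 1] : Fin 5 → ℝ) ∈ LinearMap.ker F14) ∧
    ((∀ i j : Fin 5, g14 p (E14 p i) (E14 p j) = if i = j then 1 else 0) ∧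
      Submodule.span ℝ (Set.range (E14 p)) = ⊤) ∧
    (fun X => (phi14 p).mulVec X) '' (LinearMap.ker F14 : Set (Fin 5 → ℝ)) =
      {X : Fin 5 → ℝ | ∀ W ∈ LinearMap.ker F14, g14 p X W = 0} := by
  refine ⟨⟨ker_F14_eq_span, by simp [F14_apply]⟩, ⟨g14_E14_E14 p, span_range_E14 p⟩, ?_⟩
  rw [image_phi14_ker_F14]
  ext X
  exact (g14_orthogonal_ker_F14_iff p X).symm

end
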